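/- arXiv:1512.02537 — 4 statements merged into one kernel-verified Lean document; each statement's English description precedes it below -/
import Mathlib

section
/- Let 1 ≤ p, q < ∞, ν > -1, t > 0, and α real. The function f(z) = ((z+it)/i)^{-α} on the upper half-plane belongs to L_ν^{p,q}(ℝ²₊) if and only if ν > -1 and α > 1/p + (ν+1)/q; in that case ‖f‖_{p,q,ν}^q = C·t^{-qα + q/p + ν + 1} where C = [B(1/2,(pα-1)/2)]^{q/p}·B(ν+1, qα - q/p - ν - 1). -/
open MeasureTheory Set ENNReal

/-!
On the line `Im z = y` we have `|f(x + iy)| = (x² + (y+t)²)^(-α/2)`, so the substitution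
`x = (y+t)√u` turns the inner integral into `(y+t)^(1-pα) B(1/2, (pα-1)/2)`. The outer integral
is then `∫₀^∞ (y+t)^(q/p-qα) y^ν dy`, which `y = t u` turns into
`t^(-qα+q/p+ν+1) B(ν+1, qα-q/p-ν-1)`. Both Beta integrals are positive, and
`qα - q/p - ν - 1 > 0` already forces `pα > 1`, so the norm is finite exactly when the second
parameter of the outer Beta integral is positive.
-/

/-- The Euler Beta function in the form `B(m,n) = ∫₀^∞ u^(m-1)/(1+u)^(m+n) du`. -/
noncomputable def Beta (m n : ℝ) : ℝ := ∫ u in Ioi (0:ℝ), u ^ (m - 1) / (1 + u) ^ (m + n)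

/-- The mixed norm `‖f‖_{p,q,ν}` on the upper half-plane:
`(∫₀^∞ (∫_ℝ |f(x+iy)|^p dx)^{q/p} y^ν dy)^{1/q}`. -/
noncomputable def mixedNormC (p q ν : ℝ) (f : ℂ → ℂ) : ℝ≥0∞ :=
  (∫⁻ y in Ioi (0:ℝ),
      (∫⁻ x : ℝ, (‖f (↑x + ↑y * Complex.I)‖₊ : ℝ≥0∞) ^ p) ^ (q / p)
        * ENNReal.ofReal (y ^ ν)) ^ (1 / q)

/-- The Beta integral in `ℝ≥0∞`: it is `⊤` where the real integral `Beta` diverges and takes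
the junk value `0`, so convergence and value are read off together. -/
noncomputable def betaLIntegral (m n : ℝ) : ℝ≥0∞ :=
  ∫⁻ u in Ioi (0:ℝ), ENNReal.ofReal (u ^ (m - 1) / (1 + u) ^ (m + n))

theorem Beta_nonneg (m n : ℝ) : 0 ≤ Beta m n :=
  setIntegral_nonneg measurableSet_Ioi fun u (hu : 0 < u) => by positivity

theorem betaLIntegral_ne_zero (m n : ℝ) : betaLIntegral m n ≠ 0 := by
  refine (setLIntegral_pos_iff (by fun_prop)).2 ?_ |>.ne'
  refine lt_of_lt_of_le (by simp) (measure_mono fun u (hu : u ∈ Ioi 0) => ⟨?_, hu⟩)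
  have : 0 < u := hu
  simp only [Function.mem_support, ne_eq, ENNReal.ofReal_eq_zero, not_le]
  positivity

theorem integrableOn_rpow_div_one_add_rpow {m n : ℝ} (hm : 0 < m) (hn : 0 < n) :
    IntegrableOn (fun u : ℝ => u ^ (m - 1) / (1 + u) ^ (m + n)) (Ioi 0) := by
  have hmeas : AEStronglyMeasurable (fun u : ℝ => u ^ (m - 1) / (1 + u) ^ (m + n)) :=
    (by fun_prop : Measurable _).aestronglyMeasurable
  have near_zero : IntegrableOn (fun u : ℝ => u ^ (m - 1) / (1 + u) ^ (m + n)) (Ioc 0 1) := by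
    refine Integrable.mono' (g := fun u => u ^ (m - 1)) ?_ hmeas.restrict ?_
    · rw [← uIoc_of_le zero_le_one]
      exact (intervalIntegral.intervalIntegrable_rpow' (by linarith)).1
    filter_upwards [ae_restrict_mem measurableSet_Ioc] with u hu
    have := hu.1
    rw [Real.norm_of_nonneg (by positivity)]
    exact div_le_self (by positivity) (Real.one_le_rpow (by linarith) (by linarith))
  have near_top : IntegrableOn (fun u : ℝ => u ^ (m - 1) / (1 + u) ^ (m + n)) (Ioi 1) := by
    refine Integrable.mono' (integrableOn_Ioi_rpow_of_lt (by linarith : -1 - n < -1) one_pos)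
      hmeas.restrict ?_
    filter_upwards [ae_restrict_mem measurableSet_Ioi] with u (hu : 1 < u)
    rw [Real.norm_of_nonneg (by positivity)]
    calc u ^ (m - 1) / (1 + u) ^ (m + n) ≤ u ^ (m - 1) / u ^ (m + n) := by
          gcongr; linarith
      _ = u ^ (-1 - n) := by rw [← Real.rpow_sub (by linarith)]; ring_nf
  exact (near_zero.union near_top).mono_set fun u (hu : 0 < u) =>
    (le_or_gt u 1).imp (fun h => ⟨hu, h⟩) id

theorem betaLIntegral_eq_ofReal {m n : ℝ} (hm : 0 < m) (hn : 0 < n) :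
    betaLIntegral m n = ENNReal.ofReal (Beta m n) := by
  rw [betaLIntegral, Beta, ofReal_integral_eq_lintegral_ofReal
    (integrableOn_rpow_div_one_add_rpow hm hn)]
  filter_upwards [ae_restrict_mem measurableSet_Ioi] with u (hu : 0 < u)
  positivity

theorem rpow_le_max_one_two_rpow_mul {a b : ℝ} (ha : 0 < a) (hab : a ≤ b) (hb : b ≤ 2 * a)
    (c : ℝ) : b ^ c ≤ max 1 (2 ^ c) * a ^ c := by
  rcases le_or_gt 0 c with hc | hc
  · calc b ^ c ≤ (2 * a) ^ c := Real.rpow_le_rpow (by linarith) hb hc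
      _ = 2 ^ c * a ^ c := Real.mul_rpow zero_le_two ha.le
      _ ≤ _ := by gcongr; exact le_max_right _ _
  · calc b ^ c ≤ a ^ c := Real.rpow_le_rpow_of_nonpos ha hab hc.le
      _ ≤ _ := le_mul_of_one_le_left (by positivity) (le_max_left _ _)

theorem lintegral_Ioi_rpow_eq_top {a e : ℝ} (ha : 0 < a) (he : -1 ≤ e) :
    ∫⁻ x in Ioi a, ENNReal.ofReal (x ^ e) = ⊤ := by
  by_contra h
  have hint := (lintegral_ofReal_ne_top_iff_integrable (by fun_prop)
    (ae_restrict_of_forall_mem measurableSet_Ioi fun x (hx : a < x) => by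
      have := ha.trans hx; positivity)).1 h
  exact absurd ((integrableOn_Ioi_rpow_iff ha).1 hint) (not_lt.2 he)

theorem betaLIntegral_eq_top (m : ℝ) {n : ℝ} (hn : n ≤ 0) : betaLIntegral m n = ⊤ := by
  set C := max 1 ((2:ℝ) ^ (m + n))
  have hC : 0 < C := lt_max_of_lt_left one_pos
  have lower : ∀ u ∈ Ioi (1:ℝ), C⁻¹ * u ^ (-1 - n) ≤ u ^ (m - 1) / (1 + u) ^ (m + n) := by
    intro u (hu : 1 < u)
    have hu0 : 0 < u := one_pos.trans hu
    calc C⁻¹ * u ^ (-1 - n) = u ^ (m - 1) / (C * u ^ (m + n)) := by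
          rw [show -1 - n = (m - 1) - (m + n) by ring, Real.rpow_sub hu0]; field_simp
      _ ≤ _ := by
          gcongr
          exact rpow_le_max_one_two_rpow_mul hu0 (by linarith) (by linarith) _
  refine eq_top_iff.2 (le_trans ?_ (lintegral_mono_set (Ioi_subset_Ioi zero_le_one)))
  calc ⊤ = ENNReal.ofReal C⁻¹ * ∫⁻ u in Ioi (1:ℝ), ENNReal.ofReal (u ^ (-1 - n)) := by
        rw [lintegral_Ioi_rpow_eq_top one_pos (by linarith),
          ENNReal.mul_top (by simpa using hC)]
    _ = ∫⁻ u in Ioi (1:ℝ), ENNReal.ofReal (C⁻¹ * u ^ (-1 - n)) := by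
        rw [← lintegral_const_mul' _ _ ENNReal.ofReal_ne_top]
        refine setLIntegral_congr_fun measurableSet_Ioi fun u _ => ?_
        rw [ENNReal.ofReal_mul (by positivity)]
    _ ≤ _ := setLIntegral_mono (by fun_prop) fun u hu => ENNReal.ofReal_le_ofReal (lower u hu)

theorem lintegral_Ioi_rpow_div_add_rpow {t : ℝ} (ht : 0 < t) (m n : ℝ) :
    ∫⁻ y in Ioi (0:ℝ), ENNReal.ofReal (y ^ (m - 1) / (y + t) ^ (m + n))
      = ENNReal.ofReal (t ^ (-n)) * betaLIntegral m n := by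
  have hsub := lintegral_image_eq_lintegral_abs_deriv_mul (measurableSet_Ioi (a := (0:ℝ)))
    (fun u _ => ((hasDerivAt_id' u).const_mul t).hasDerivWithinAt)
    (mul_right_injective₀ ht.ne').injOn
    (fun y => ENNReal.ofReal (y ^ (m - 1) / (y + t) ^ (m + n)))
  rw [image_mul_left_Ioi ht, mul_zero] at hsub
  rw [hsub, betaLIntegral, ← lintegral_const_mul' _ _ ofReal_ne_top]
  refine setLIntegral_congr_fun measurableSet_Ioi fun u (hu : 0 < u) => ?_
  rw [mul_one, abs_of_pos ht, ← ofReal_mul ht.le, ← ofReal_mul (by positivity)]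
  congr 1
  rw [show t * u + t = t * (1 + u) by ring, Real.mul_rpow ht.le hu.le,
    Real.mul_rpow ht.le (by positivity), Real.rpow_neg ht.le, Real.rpow_sub_one ht.ne',
    Real.rpow_add ht]
  field_simp

theorem lintegral_eq_two_mul_setLIntegral_Ioi_of_even {f : ℝ → ℝ≥0∞} (hf : ∀ x, f (-x) = f x) :
    ∫⁻ x, f x = 2 * ∫⁻ x in Ioi 0, f x := by
  have on_Iio : ∫⁻ x in Iio 0, f x = ∫⁻ x in Ioi 0, f x := by
    have hsub := lintegral_image_eq_lintegral_abs_deriv_mul (measurableSet_Ioi (a := (0:ℝ)))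
      (fun x _ => (hasDerivAt_neg x).hasDerivWithinAt) neg_injective.injOn f
    simpa [hf] using hsub
  rw [← setLIntegral_univ, ← Iio_union_Ici, lintegral_union measurableSet_Ici
    (Iio_disjoint_Ici le_rfl), setLIntegral_congr Ioi_ae_eq_Ici.symm, on_Iio, two_mul]

theorem image_sq_Ioi_zero : (fun x : ℝ => x ^ 2) '' Ioi 0 = Ioi 0 := by
  ext u
  refine ⟨?_, fun (hu : 0 < u) => ⟨√u, Real.sqrt_pos.2 hu, Real.sq_sqrt hu.le⟩⟩
  rintro ⟨x, hx, rfl⟩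
  exact pow_pos (show (0:ℝ) < x from hx) 2

theorem lintegral_sq_add_sq_rpow_neg {s : ℝ} (hs : 0 < s) (n : ℝ) :
    ∫⁻ x : ℝ, ENNReal.ofReal ((x ^ 2 + s ^ 2) ^ (-(n + 1 / 2)))
      = ENNReal.ofReal (s ^ (-(2 * n))) * betaLIntegral (1 / 2) n := by
  have hsub := lintegral_image_eq_lintegral_abs_deriv_mul (measurableSet_Ioi (a := (0:ℝ)))
    (fun x _ => (hasDerivAt_pow 2 x).hasDerivWithinAt)
    ((pow_left_strictMonoOn₀ two_ne_zero).injOn.mono Ioi_subset_Ici_self)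
    (fun u => ENNReal.ofReal (u ^ ((1:ℝ) / 2 - 1) / (u + s ^ 2) ^ (1 / 2 + n)))
  rw [image_sq_Ioi_zero, lintegral_Ioi_rpow_div_add_rpow (by positivity)] at hsub
  calc ∫⁻ x : ℝ, ENNReal.ofReal ((x ^ 2 + s ^ 2) ^ (-(n + 1 / 2)))
      = 2 * ∫⁻ x in Ioi 0, ENNReal.ofReal ((x ^ 2 + s ^ 2) ^ (-(n + 1 / 2))) :=
        lintegral_eq_two_mul_setLIntegral_Ioi_of_even fun x => by rw [neg_sq]
    _ = ENNReal.ofReal ((s ^ 2) ^ (-n)) * betaLIntegral (1 / 2) n := by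
        rw [hsub, ← lintegral_const_mul' _ _ ofNat_ne_top]
        refine setLIntegral_congr_fun measurableSet_Ioi fun x (hx : 0 < x) => ?_
        have hx' : (x ^ 2) ^ ((1:ℝ) / 2 - 1) = x⁻¹ := by
          rw [show (1:ℝ) / 2 - 1 = -(1 / 2) by norm_num, Real.rpow_neg (by positivity),
            ← Real.sqrt_eq_rpow, Real.sqrt_sq hx.le]
        rw [hx', ← ofReal_ofNat, ← ofReal_mul (abs_nonneg _), ← ofReal_mul zero_le_two]
        congr 1
        rw [Real.rpow_neg (by positivity), add_comm n, abs_of_pos (by positivity)]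
        push_cast
        field_simp
    _ = _ := by
        rw [← Real.rpow_natCast, ← Real.rpow_mul hs.le]
        norm_num

theorem coe_nnnorm_cpow_neg_rpow (x s α : ℝ) {p : ℝ} (hp : 0 ≤ p) :
    (‖((↑x + ↑s * Complex.I) / Complex.I) ^ (-(α:ℂ))‖₊ : ℝ≥0∞) ^ p
      = ENNReal.ofReal ((x ^ 2 + s ^ 2) ^ (-(p * α / 2))) := by
  have hnorm : ‖((↑x + ↑s * Complex.I) / Complex.I) ^ (-(α:ℂ))‖ = (x ^ 2 + s ^ 2) ^ (-(α / 2)) := by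
    rw [← Complex.ofReal_neg, Complex.norm_cpow_real, norm_div, Complex.norm_I, div_one,
      Complex.norm_add_mul_I, Real.sqrt_eq_rpow, ← Real.rpow_mul (by positivity)]
    ring_nf
  rw [← enorm_eq_nnnorm, ← ofReal_norm, ENNReal.ofReal_rpow_of_nonneg (norm_nonneg _) hp, hnorm,
    ← Real.rpow_mul (by positivity)]
  congr 3
  ring

theorem lintegral_coe_nnnorm_cpow_neg_rpow {s : ℝ} (hs : 0 < s) (α : ℝ) {p : ℝ} (hp : 0 ≤ p) :
    ∫⁻ x : ℝ, (‖((↑x + ↑s * Complex.I) / Complex.I) ^ (-(α:ℂ))‖₊ : ℝ≥0∞) ^ p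
      = ENNReal.ofReal (s ^ (1 - p * α)) * betaLIntegral (1 / 2) ((p * α - 1) / 2) := by
  simp_rw [coe_nnnorm_cpow_neg_rpow _ _ _ hp]
  rw [show -(p * α / 2) = -((p * α - 1) / 2 + 1 / 2) by ring, lintegral_sq_add_sq_rpow_neg hs]
  congr 3
  ring

theorem lintegral_Ioi_add_rpow_mul_rpow {t r : ℝ} (ht : 0 < t) (hr : 0 ≤ r) (a ν : ℝ)
    (J : ℝ≥0∞) :
    ∫⁻ y in Ioi (0:ℝ), (ENNReal.ofReal ((y + t) ^ a) * J) ^ r * ENNReal.ofReal (y ^ ν)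
      = J ^ r
        * (ENNReal.ofReal (t ^ (a * r + ν + 1)) * betaLIntegral (ν + 1) (-(a * r) - ν - 1)) := by
  rw [show a * r + ν + 1 = -(-(a * r) - ν - 1) by ring, ← lintegral_Ioi_rpow_div_add_rpow ht,
    ← lintegral_const_mul _ (by fun_prop)]
  refine setLIntegral_congr_fun measurableSet_Ioi fun y (hy : 0 < y) => ?_
  rw [ENNReal.mul_rpow_of_nonneg _ _ hr, ENNReal.ofReal_rpow_of_nonneg (by positivity) hr,
    mul_comm _ (J ^ r), mul_assoc, ← ofReal_mul (by positivity), ← Real.rpow_mul (by positivity)]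
  congr 2
  rw [show ν + 1 + (-(a * r) - ν - 1) = -(a * r) by ring, Real.rpow_neg (by positivity),
    add_sub_cancel_right, div_inv_eq_mul, mul_comm]

theorem mixedNormC_rpow_eq {p q : ℝ} (hp : 0 < p) (hq : 0 < q) (ν : ℝ) {t : ℝ} (ht : 0 < t)
    (α : ℝ) :
    mixedNormC p q ν (fun z => ((z + ↑t * Complex.I) / Complex.I) ^ (-(α:ℂ))) ^ q
      = betaLIntegral (1 / 2) ((p * α - 1) / 2) ^ (q / p)
        * (ENNReal.ofReal (t ^ (-(q * α) + q / p + ν + 1))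
          * betaLIntegral (ν + 1) (q * α - q / p - ν - 1)) := by
  have horizontal : ∀ y ∈ Ioi (0:ℝ),
      ∫⁻ x : ℝ, (‖((↑x + ↑y * Complex.I + ↑t * Complex.I) / Complex.I) ^ (-(α:ℂ))‖₊ : ℝ≥0∞) ^ p
        = ENNReal.ofReal ((y + t) ^ (1 - p * α)) * betaLIntegral (1 / 2) ((p * α - 1) / 2) := by
    intro y (hy : 0 < y)
    rw [← lintegral_coe_nnnorm_cpow_neg_rpow (by linarith) α hp.le]
    push_cast
    simp_rw [add_assoc, ← add_mul]
  have hexp : (1 - p * α) * (q / p) = -(q * α) + q / p := by field_simp; ring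
  rw [mixedNormC, ← ENNReal.rpow_mul, one_div_mul_cancel hq.ne', ENNReal.rpow_one,
    setLIntegral_congr_fun measurableSet_Ioi fun y hy => by rw [horizontal y hy],
    lintegral_Ioi_add_rpow_mul_rpow ht (by positivity), hexp]
  congr 3
  ring

theorem mixedNormC_rpow_eq_ofReal {p q ν : ℝ} (hp : 0 < p) (hq : 0 < q) (hν : -1 < ν) {t : ℝ}
    (ht : 0 < t) {α : ℝ} (hqα : 0 < q * α - q / p - ν - 1) :
    mixedNormC p q ν (fun z => ((z + ↑t * Complex.I) / Complex.I) ^ (-(α:ℂ))) ^ q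
      = ENNReal.ofReal ((Beta (1/2) ((p * α - 1)/2)) ^ (q / p)
          * Beta (ν + 1) (q * α - q / p - ν - 1) * t ^ (-(q * α) + q / p + ν + 1)) := by
  have hpα : 1 < p * α := by
    have h : q / p < q * α := by linarith
    rw [div_lt_iff₀ hp] at h
    nlinarith
  have hB : 0 ≤ Beta (1/2) ((p * α - 1)/2) ^ (q / p) := Real.rpow_nonneg (Beta_nonneg _ _) _
  rw [mixedNormC_rpow_eq hp hq ν ht α, betaLIntegral_eq_ofReal one_half_pos (by linarith),
    betaLIntegral_eq_ofReal (by linarith) hqα,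
    ENNReal.ofReal_rpow_of_nonneg (Beta_nonneg _ _) (by positivity),
    ofReal_mul (mul_nonneg hB (Beta_nonneg _ _)), ofReal_mul hB]
  ring

theorem stmt_2 (p q ν t α : ℝ) (hp : 1 ≤ p) (hq : 1 ≤ q) (hν : -1 < ν) (ht : 0 < t) :
    (mixedNormC p q ν (fun z => ((z + ↑t * Complex.I) / Complex.I) ^ (-(α:ℂ))) < ⊤ ↔
      (-1 < ν ∧ 1 / p + (ν + 1) / q < α)) ∧
    ((-1 < ν ∧ 1 / p + (ν + 1) / q < α) →
      (mixedNormC p q ν (fun z => ((z + ↑t * Complex.I) / Complex.I) ^ (-(α:ℂ)))) ^ q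
        = ENNReal.ofReal
            ((Beta (1/2) ((p * α - 1)/2)) ^ (q / p) * Beta (ν + 1) (q * α - q / p - ν - 1)
              * t ^ (-(q * α) + q / p + ν + 1))) := by
  have hp0 : 0 < p := by linarith
  have hq0 : 0 < q := by linarith
  have hΦ := mixedNormC_rpow_eq hp0 hq0 ν ht α
  set Φ := mixedNormC p q ν (fun z => ((z + ↑t * Complex.I) / Complex.I) ^ (-(α:ℂ)))
  have hcond : 1 / p + (ν + 1) / q < α ↔ 0 < q * α - q / p - ν - 1 := by
    rw [show q * α - q / p - ν - 1 = q * (α - (1 / p + (ν + 1) / q)) by field_simp; ring,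
      mul_pos_iff_of_pos_left hq0, sub_pos]
  have hJ_ne_zero : betaLIntegral (1 / 2) ((p * α - 1) / 2) ^ (q / p) ≠ 0 := by
    simp [ENNReal.rpow_eq_zero_iff, betaLIntegral_ne_zero, (div_pos hq0 hp0).not_gt]
  have value (h : 1 / p + (ν + 1) / q < α) := mixedNormC_rpow_eq_ofReal hp0 hq0 hν ht (hcond.1 h)
  refine ⟨⟨fun hfin => ⟨hν, ?_⟩, fun ⟨_, h⟩ => ?_⟩, fun ⟨_, h⟩ => value h⟩
  · by_contra h
    have hdiv : Φ ^ q = ⊤ := by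
      rw [hΦ, betaLIntegral_eq_top _ (not_lt.1 (mt hcond.2 h)),
        mul_top (ofReal_pos.2 (Real.rpow_pos_of_pos ht _)).ne', mul_top hJ_ne_zero]
    exact ((ENNReal.rpow_lt_top_iff_of_pos hq0).2 hfin).ne hdiv
  · exact (ENNReal.rpow_lt_top_iff_of_pos hq0).1 (value h ▸ ofReal_lt_top)
end

section
/- Suppose a, b > -1, 1 ≤ p ≤ q < ∞ and the operator H_{α,β,γ} is bounded from L^p((0,∞), y^a dy) to L^q((0,∞), y^b dy). Then γ = α + β + 1 + (b+1)/q - (a+1)/p and -qα < b+1 < q(γ-α). -/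
open MeasureTheory Set ENNReal

/-- The measure `x^a dx` on `(0,∞)`. -/
noncomputable def wMeasure (a : ℝ) : Measure ℝ :=
  (volume.restrict (Ioi (0:ℝ))).withDensity (fun x => ENNReal.ofReal (x ^ a))

/-- The Hilbert-type operator `H_{α,β,γ} f(x) = x^α ∫₀^∞ f(y) y^β/(x+y)^γ dy`. -/
noncomputable def Hop (α β γ : ℝ) (f : ℝ → ℝ) : ℝ → ℝ :=
  fun x => x ^ α * ∫ y in Ioi (0:ℝ), f y * y ^ β / (x + y) ^ γ


/-! Test the bound on `f = 𝟙_(1,2)`. Near `0` the image `H f` is comparable to `x ^ α` and near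
`∞` to `x ^ (α - γ)`, so finiteness of `∫ x ^ b |H f| ^ q` at both ends gives the two strict
inequalities. Dilating, `f (l ·)` scales `‖H f‖` by `l ^ (γ - β - 1 - α - (b + 1) / q)` and `‖f‖`
by `l ^ (-(a + 1) / p)`; a bound uniform in `l > 0` forces these exponents to agree. -/

lemma eq_zero_of_forall_rpow_le {t K : ℝ} (h : ∀ l : ℝ, 0 < l → l ^ t ≤ K) : t = 0 := by
  by_contra ht
  have hK : 1 ≤ K := by simpa using h 1 one_pos
  have := h ((K + 1) ^ t⁻¹) (by positivity)
  rw [← Real.rpow_mul (by linarith), inv_mul_cancel₀ ht, Real.rpow_one] at this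
  linarith

lemma ENNReal.eq_of_forall_ofReal_rpow_mul_le {s t : ℝ} {A B : ℝ≥0∞} (hA₀ : A ≠ 0)
    (hA : A ≠ ⊤) (hB : B ≠ ⊤)
    (h : ∀ l : ℝ, 0 < l → ENNReal.ofReal (l ^ s) * A ≤ ENNReal.ofReal (l ^ t) * B) :
    s = t := by
  have hA' : 0 < A.toReal := ENNReal.toReal_pos hA₀ hA
  suffices s - t = 0 by linarith
  refine eq_zero_of_forall_rpow_le (K := B.toReal / A.toReal) fun l hl => ?_
  have := ENNReal.toReal_mono (mul_ne_top ofReal_ne_top hB) (h l hl)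
  rw [toReal_mul, toReal_mul, toReal_ofReal (by positivity), toReal_ofReal (by positivity)] at this
  rw [Real.rpow_sub hl, div_le_div_iff₀ (by positivity) hA']
  nlinarith [Real.rpow_pos_of_pos hl t]

lemma ae_wMeasure_pos (b : ℝ) : ∀ᵐ x ∂wMeasure b, 0 < x :=
  (withDensity_absolutelyContinuous _ _).ae_le (ae_restrict_mem measurableSet_Ioi)

lemma lintegral_wMeasure (b : ℝ) (F : ℝ → ℝ≥0∞) :
    ∫⁻ x, F x ∂wMeasure b = ∫⁻ x in Ioi 0, ENNReal.ofReal (x ^ b) * F x :=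
  lintegral_withDensity_eq_lintegral_mul_non_measurable _ (by fun_prop)
    (.of_forall fun _ => ofReal_lt_top) F

lemma setLIntegral_Ioi_comp_mul_left (F : ℝ → ℝ≥0∞) {l : ℝ} (hl : 0 < l) :
    ∫⁻ x in Ioi 0, F (l * x) = ENNReal.ofReal l⁻¹ * ∫⁻ x in Ioi 0, F x := by
  set e := MeasurableEquiv.mulLeft₀ l hl.ne'
  have hpre : e ⁻¹' Ioi 0 = Ioi 0 := by
    ext x; simp [e, mul_pos_iff_of_pos_left hl]
  calc ∫⁻ x in Ioi 0, F (l * x) = ∫⁻ x in e ⁻¹' Ioi 0, F (e x) := by rw [hpre]; rfl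
    _ = ∫⁻ y in Ioi 0, F y ∂volume.map e := by rw [e.restrict_map, lintegral_map_equiv]
    _ = _ := by
      rw [show ⇑e = (l * ·) from rfl, Real.map_volume_mul_left hl.ne', Measure.restrict_smul,
        lintegral_smul_measure, abs_of_pos (inv_pos.2 hl), smul_eq_mul]

lemma lintegral_wMeasure_comp_mul_left (b : ℝ) (F : ℝ → ℝ≥0∞) {l : ℝ} (hl : 0 < l) :
    ∫⁻ x, F (l * x) ∂wMeasure b = ENNReal.ofReal (l ^ (-(b + 1))) * ∫⁻ x, F x ∂wMeasure b := by
  have key : ∀ x ∈ Ioi (0 : ℝ), ENNReal.ofReal (x ^ b) * F (l * x)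
      = ENNReal.ofReal (l ^ (-b)) * (ENNReal.ofReal ((l * x) ^ b) * F (l * x)) := by
    intro x hx
    rw [← mul_assoc, ← ofReal_mul (by positivity), Real.mul_rpow hl.le (le_of_lt hx),
      ← mul_assoc, ← Real.rpow_add hl, neg_add_cancel, Real.rpow_zero, one_mul]
  rw [lintegral_wMeasure, lintegral_wMeasure, setLIntegral_congr_fun measurableSet_Ioi key,
    lintegral_const_mul' _ _ ofReal_ne_top,
    setLIntegral_Ioi_comp_mul_left (fun y => ENNReal.ofReal (y ^ b) * F y) hl, ← mul_assoc,
    ← ofReal_mul (by positivity), ← Real.rpow_neg_one, ← Real.rpow_add hl]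
  congr 3
  ring

lemma eLpNorm_wMeasure {b q : ℝ} (hq : 0 < q) (g : ℝ → ℝ) :
    eLpNorm g (ENNReal.ofReal q) (wMeasure b) = (∫⁻ x, ‖g x‖ₑ ^ q ∂wMeasure b) ^ (1 / q) := by
  rw [eLpNorm_eq_lintegral_rpow_enorm_toReal (by simpa using hq) ofReal_ne_top,
    toReal_ofReal hq.le]

lemma eLpNorm_wMeasure_comp_mul_left {b q : ℝ} (hq : 0 < q) (g : ℝ → ℝ) {l : ℝ} (hl : 0 < l) :
    eLpNorm (fun x => g (l * x)) (ENNReal.ofReal q) (wMeasure b)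
      = ENNReal.ofReal (l ^ (-(b + 1) / q)) * eLpNorm g (ENNReal.ofReal q) (wMeasure b) := by
  rw [eLpNorm_wMeasure hq, eLpNorm_wMeasure hq,
    lintegral_wMeasure_comp_mul_left b (fun y => ‖g y‖ₑ ^ q) hl,
    mul_rpow_of_nonneg _ _ (by positivity), ofReal_rpow_of_pos (by positivity),
    ← Real.rpow_mul hl.le, mul_one_div]

lemma ofReal_rpow_mul_setLIntegral_le {b q c s : ℝ} {S : Set ℝ} (hS : MeasurableSet S)
    (hS₀ : S ⊆ Ioi 0) (hq : 0 ≤ q) (hc : 0 < c) {g : ℝ → ℝ}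
    (hg : ∀ x ∈ S, c * x ^ s ≤ g x) :
    ENNReal.ofReal c ^ q * ∫⁻ x in S, ENNReal.ofReal (x ^ (b + s * q))
      ≤ ∫⁻ x, ‖g x‖ₑ ^ q ∂wMeasure b := by
  have hpt : ∀ x ∈ S, ENNReal.ofReal c ^ q * ENNReal.ofReal (x ^ (b + s * q))
      ≤ ENNReal.ofReal (x ^ b) * ‖g x‖ₑ ^ q := by
    intro x hx
    have hx₀ : 0 < x := hS₀ hx
    have hsplit : ENNReal.ofReal c ^ q * ENNReal.ofReal (x ^ (b + s * q))
        = ENNReal.ofReal (x ^ b) * ENNReal.ofReal (c * x ^ s) ^ q := by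
      rw [Real.rpow_add hx₀, Real.rpow_mul hx₀.le, ofReal_mul (by positivity),
        ofReal_mul (by positivity), ← ofReal_rpow_of_nonneg (by positivity) hq,
        mul_rpow_of_nonneg _ _ hq]
      ring
    rw [hsplit]
    gcongr
    exact (ofReal_le_ofReal (hg x hx)).trans (Real.ofReal_le_enorm _)
  calc ENNReal.ofReal c ^ q * ∫⁻ x in S, ENNReal.ofReal (x ^ (b + s * q))
      = ∫⁻ x in S, ENNReal.ofReal c ^ q * ENNReal.ofReal (x ^ (b + s * q)) :=
        (lintegral_const_mul' _ _ (rpow_ne_top_of_nonneg hq ofReal_ne_top)).symm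
    _ ≤ ∫⁻ x in S, ENNReal.ofReal (x ^ b) * ‖g x‖ₑ ^ q := setLIntegral_mono' hS hpt
    _ ≤ ∫⁻ x in Ioi 0, ENNReal.ofReal (x ^ b) * ‖g x‖ₑ ^ q := lintegral_mono_set hS₀
    _ = ∫⁻ x, ‖g x‖ₑ ^ q ∂wMeasure b := (lintegral_wMeasure b _).symm

lemma integrableOn_rpow_of_le_of_eLpNorm_ne_top {b q c s : ℝ} {S : Set ℝ}
    (hS : MeasurableSet S) (hS₀ : S ⊆ Ioi 0) (hq : 0 < q) (hc : 0 < c) {g : ℝ → ℝ}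
    (hg : ∀ x ∈ S, c * x ^ s ≤ g x) (hfin : eLpNorm g (ENNReal.ofReal q) (wMeasure b) ≠ ⊤) :
    IntegrableOn (fun x => x ^ (b + s * q)) S := by
  have hlint : ∫⁻ x, ‖g x‖ₑ ^ q ∂wMeasure b ≠ ⊤ := by
    rw [eLpNorm_wMeasure hq] at hfin
    exact fun h => hfin (by rw [h, top_rpow_of_pos (by positivity)])
  refine (lintegral_ofReal_ne_top_iff_integrable (by fun_prop)
    ((ae_restrict_mem hS).mono fun x hx => Real.rpow_nonneg (hS₀ hx).le _)).1 ?_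
  have hc' : ENNReal.ofReal c ^ q ≠ 0 := by simp [hc, hq]
  exact (lt_top_of_mul_ne_top_right (ne_top_of_le_ne_top hlint
    (ofReal_rpow_mul_setLIntegral_le hS hS₀ hq.le hc hg)) hc').ne

lemma eLpNorm_wMeasure_ne_zero_of_le {b q c s : ℝ} {S : Set ℝ} (hS : MeasurableSet S)
    (hS₀ : S ⊆ Ioi 0) (hSvol : volume S ≠ 0) (hq : 0 < q) (hc : 0 < c) {g : ℝ → ℝ}
    (hg : ∀ x ∈ S, c * x ^ s ≤ g x) :
    eLpNorm g (ENNReal.ofReal q) (wMeasure b) ≠ 0 := by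
  have hpos : 0 < ∫⁻ x in S, ENNReal.ofReal (x ^ (b + s * q)) := by
    rw [setLIntegral_pos_iff (by fun_prop),
      inter_eq_right.2 fun x hx => by simpa using Real.rpow_pos_of_pos (hS₀ hx) _]
    exact pos_iff_ne_zero.2 hSvol
  have hc' : 0 < ENNReal.ofReal c ^ q := rpow_pos (ofReal_pos.2 hc) ofReal_ne_top
  rw [eLpNorm_wMeasure hq]
  exact (rpow_pos_of_nonneg ((mul_pos hc'.ne' hpos.ne').trans_le
    (ofReal_rpow_mul_setLIntegral_le hS hS₀ hq.le hc hg)) (by positivity)).ne'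

section Hop

variable {α β γ : ℝ}

lemma Hop_comp_mul_left (f : ℝ → ℝ) {l x : ℝ} (hl : 0 < l) (hx : 0 < x) :
    Hop α β γ (fun y => f (l * y)) x = l ^ (γ - β - 1 - α) * Hop α β γ f (l * x) := by
  have hsubst : ∫ y in Ioi 0, f (l * y) * y ^ β / (x + y) ^ γ
      = l⁻¹ * ∫ u in Ioi 0, f u * (u / l) ^ β / (x + u / l) ^ γ := by
    have := integral_comp_mul_left_Ioi (fun u => f u * (u / l) ^ β / (x + u / l) ^ γ) 0 hl
    simpa only [mul_zero, mul_div_cancel_left₀ _ hl.ne', smul_eq_mul] using this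
  have hpull : ∫ u in Ioi 0, f u * (u / l) ^ β / (x + u / l) ^ γ
      = l ^ (γ - β) * ∫ u in Ioi 0, f u * u ^ β / (l * x + u) ^ γ := by
    rw [← integral_const_mul]
    refine setIntegral_congr_fun measurableSet_Ioi fun u (hu : 0 < u) => ?_
    have hxu : x + u / l = (l * x + u) / l := by field_simp
    rw [hxu, Real.div_rpow hu.le hl.le, Real.div_rpow (by positivity) hl.le, Real.rpow_sub hl]
    have : 0 < (l * x + u) ^ γ := by positivity
    field_simp
  unfold Hop
  rw [hsubst, hpull, Real.mul_rpow hl.le hx.le]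
  simp only [Real.rpow_sub hl, Real.rpow_one]
  field_simp

lemma eLpNorm_Hop_comp_mul_left {b q : ℝ} (hq : 0 < q) (f : ℝ → ℝ) {l : ℝ} (hl : 0 < l) :
    eLpNorm (Hop α β γ fun y => f (l * y)) (ENNReal.ofReal q) (wMeasure b)
      = ENNReal.ofReal (l ^ (γ - β - 1 - α - (b + 1) / q))
        * eLpNorm (Hop α β γ f) (ENNReal.ofReal q) (wMeasure b) := by
  have hae : Hop α β γ (fun y => f (l * y)) =ᵐ[wMeasure b]
      l ^ (γ - β - 1 - α) • fun x => Hop α β γ f (l * x) :=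
    (ae_wMeasure_pos b).mono fun x hx => Hop_comp_mul_left f hl hx
  rw [eLpNorm_congr_ae hae, eLpNorm_const_smul, eLpNorm_wMeasure_comp_mul_left hq _ hl,
    Real.enorm_of_nonneg (by positivity), ← mul_assoc, ← ofReal_mul (by positivity),
    ← Real.rpow_add hl, neg_div, ← sub_eq_add_neg]

end Hop

lemma exists_pos_le_rpow_div_rpow (β γ : ℝ) :
    ∃ c > 0, ∀ y ∈ Icc (1 : ℝ) 2, ∀ t ∈ Icc (1 : ℝ) 3, c ≤ y ^ β / t ^ γ := by
  have hK : IsCompact (Icc (1 : ℝ) 2 ×ˢ Icc (1 : ℝ) 3) := isCompact_Icc.prod isCompact_Icc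
  have hcont : ContinuousOn (fun z : ℝ × ℝ => z.1 ^ β / z.2 ^ γ) (Icc (1 : ℝ) 2 ×ˢ Icc 1 3) := by
    refine ContinuousOn.div ?_ ?_ fun z hz => ?_
    · exact continuousOn_fst.rpow_const fun z hz => Or.inl (by linarith [hz.1.1])
    · exact continuousOn_snd.rpow_const fun z hz => Or.inl (by linarith [hz.2.1])
    · exact (Real.rpow_pos_of_pos (by linarith [hz.2.1]) γ).ne'
  obtain ⟨z, hz, hmin⟩ := hK.exists_isMinOn ⟨(1, 1), by simp, by simp⟩ hcont
  have : 0 < z.1 ^ β / z.2 ^ γ := by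
    have := hz.1.1; have := hz.2.1
    exact div_pos (Real.rpow_pos_of_pos (by linarith) β) (Real.rpow_pos_of_pos (by linarith) γ)
  exact ⟨_, this, fun y hy t ht => hmin (mk_mem_prod hy ht)⟩

noncomputable def testFun : ℝ → ℝ := (Ioo (1 : ℝ) 2).indicator fun _ => 1

lemma Ioo_one_two_subset_Ioi_zero : Ioo (1 : ℝ) 2 ⊆ Ioi 0 :=
  Ioo_subset_Ioi_self.trans (Ioi_subset_Ioi zero_le_one)

lemma measurable_testFun : Measurable testFun :=
  measurable_const.indicator measurableSet_Ioo

lemma eLpNorm_testFun_ne_top {a p : ℝ} (hp : 0 < p) :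
    eLpNorm testFun (ENNReal.ofReal p) (wMeasure a) ≠ ⊤ := by
  have hint : IntegrableOn (fun x : ℝ => x ^ a) (Ioo 1 2) :=
    (ContinuousOn.integrableOn_Icc (continuousOn_id.rpow_const fun x hx =>
      Or.inl (by simp only [id]; linarith [hx.1]))).mono_set Ioo_subset_Icc_self
  have hvol : wMeasure a (Ioo 1 2) ≠ ⊤ := by
    rw [wMeasure, withDensity_apply _ measurableSet_Ioo, Measure.restrict_restrict measurableSet_Ioo,
      inter_eq_left.2 Ioo_one_two_subset_Ioi_zero]
    exact (lintegral_ofReal_ne_top_iff_integrable hint.aestronglyMeasurable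
      ((ae_restrict_mem measurableSet_Ioo).mono fun x hx => Real.rpow_nonneg (by linarith [hx.1]) _)).2 hint
  rw [testFun, eLpNorm_indicator_const measurableSet_Ioo (by simpa using hp) ofReal_ne_top]
  exact mul_ne_top (by simp) (rpow_ne_top_of_nonneg (by positivity) hvol)

section Hop

variable {α β γ : ℝ}

lemma Hop_testFun (x : ℝ) :
    Hop α β γ testFun x = x ^ α * ∫ y in Ioo 1 2, y ^ β / (x + y) ^ γ := by
  have hind : (fun y => testFun y * y ^ β / (x + y) ^ γ)
      = (Ioo 1 2).indicator fun y => y ^ β / (x + y) ^ γ := by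
    ext y
    by_cases hy : y ∈ Ioo (1 : ℝ) 2 <;> simp [testFun, hy]
  rw [Hop, hind, integral_indicator measurableSet_Ioo, Measure.restrict_restrict measurableSet_Ioo,
    inter_eq_left.2 Ioo_one_two_subset_Ioi_zero]

lemma mul_le_Hop_testFun {x m : ℝ} (hx : 0 < x) (hm : ∀ y ∈ Ioo (1 : ℝ) 2, m ≤ y ^ β / (x + y) ^ γ) :
    x ^ α * m ≤ Hop α β γ testFun x := by
  have hcont : ContinuousOn (fun y : ℝ => y ^ β / (x + y) ^ γ) (Icc 1 2) := by
    refine ContinuousOn.div ?_ ?_ fun y hy => (Real.rpow_pos_of_pos (by linarith [hy.1]) γ).ne'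
    · exact continuousOn_id.rpow_const fun y hy => Or.inl (by linarith [hy.1] : (0 : ℝ) < y).ne'
    · exact (continuousOn_const.add continuousOn_id).rpow_const fun y hy =>
        Or.inl (by linarith [hy.1] : (0 : ℝ) < x + y).ne'
  have hint := setIntegral_ge_of_const_le_real measurableSet_Ioo (measure_Ioo_lt_top (μ := volume)).ne hm
    (hcont.integrableOn_Icc.mono_set Ioo_subset_Icc_self)
  norm_num [Real.volume_real_Ioo] at hint
  rw [Hop_testFun]
  gcongr

lemma exists_mul_rpow_le_Hop_testFun_of_lt_one :
    ∃ c > 0, ∀ x ∈ Ioo (0 : ℝ) 1, c * x ^ α ≤ Hop α β γ testFun x := by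
  obtain ⟨c, hc, hle⟩ := exists_pos_le_rpow_div_rpow β γ
  refine ⟨c, hc, fun x hx => ?_⟩
  rw [mul_comm]
  exact mul_le_Hop_testFun hx.1 fun y hy => hle y (Ioo_subset_Icc_self hy) (x + y)
    ⟨by linarith [hx.1, hy.1], by linarith [hx.2, hy.2]⟩

lemma exists_mul_rpow_le_Hop_testFun_of_one_lt :
    ∃ c > 0, ∀ x ∈ Ioi (1 : ℝ), c * x ^ (α - γ) ≤ Hop α β γ testFun x := by
  obtain ⟨c, hc, hle⟩ := exists_pos_le_rpow_div_rpow β γ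
  refine ⟨c, hc, fun x (hx : 1 < x) => ?_⟩
  have hx₀ : 0 < x := by linarith
  calc c * x ^ (α - γ) = x ^ α * (x ^ (-γ) * c) := by
        rw [Real.rpow_sub hx₀, Real.rpow_neg hx₀.le]; ring
    _ ≤ _ := mul_le_Hop_testFun hx₀ fun y hy => ?_
  have hy₀ : 0 < y := by linarith [hy.1]
  have ht : 1 + y / x ∈ Icc (1 : ℝ) 3 := by
    refine ⟨by linarith [div_pos hy₀ hx₀], ?_⟩
    have : y / x ≤ 2 := (div_le_iff₀ hx₀).2 (by linarith [hy.2])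
    linarith
  have hxy : (x + y) ^ γ = x ^ γ * (1 + y / x) ^ γ := by
    rw [← Real.mul_rpow hx₀.le (by positivity)]
    congr 1
    field_simp
  calc x ^ (-γ) * c ≤ x ^ (-γ) * (y ^ β / (1 + y / x) ^ γ) := by
        gcongr
        exact hle y (Ioo_subset_Icc_self hy) _ ht
    _ = y ^ β / (x + y) ^ γ := by
        have : 0 < (1 + y / x) ^ γ := Real.rpow_pos_of_pos (by linarith [ht.1]) γ
        rw [hxy, Real.rpow_neg hx₀.le]
        field_simp

end Hop

theorem stmt_7_general (a b p q α β γ : ℝ) (hp : 1 ≤ p) (hpq : p ≤ q)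
    (hbdd : ∃ C : ℝ≥0∞, C ≠ ⊤ ∧ ∀ f : ℝ → ℝ, Measurable f →
        eLpNorm (Hop α β γ f) (ENNReal.ofReal q) (wMeasure b)
          ≤ C * eLpNorm f (ENNReal.ofReal p) (wMeasure a)) :
    γ = α + β + 1 + ((b + 1) / q - (a + 1) / p) ∧
      -q * α < b + 1 ∧ b + 1 < q * (γ - α) := by
  obtain ⟨C, hC, hbound⟩ := hbdd
  have hp₀ : 0 < p := by linarith
  have hq₀ : 0 < q := by linarith
  have hB : C * eLpNorm testFun (ENNReal.ofReal p) (wMeasure a) ≠ ⊤ :=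
    mul_ne_top hC (eLpNorm_testFun_ne_top hp₀)
  have hA : eLpNorm (Hop α β γ testFun) (ENNReal.ofReal q) (wMeasure b) ≠ ⊤ :=
    ne_top_of_le_ne_top hB (hbound _ measurable_testFun)
  obtain ⟨c₀, hc₀, hle₀⟩ := exists_mul_rpow_le_Hop_testFun_of_lt_one (α := α) (β := β) (γ := γ)
  obtain ⟨c₁, hc₁, hle₁⟩ := exists_mul_rpow_le_Hop_testFun_of_one_lt (α := α) (β := β) (γ := γ)
  have hzero : -1 < b + α * q := (intervalIntegral.integrableOn_Ioo_rpow_iff one_pos).1 <|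
    integrableOn_rpow_of_le_of_eLpNorm_ne_top measurableSet_Ioo (fun x hx => hx.1) hq₀ hc₀ hle₀ hA
  have hinfty : b + (α - γ) * q < -1 := (integrableOn_Ioi_rpow_iff one_pos).1 <|
    integrableOn_rpow_of_le_of_eLpNorm_ne_top measurableSet_Ioi (Ioi_subset_Ioi zero_le_one) hq₀
      hc₁ hle₁ hA
  have hA₀ : eLpNorm (Hop α β γ testFun) (ENNReal.ofReal q) (wMeasure b) ≠ 0 :=
    eLpNorm_wMeasure_ne_zero_of_le measurableSet_Ioo (fun x hx => hx.1) (by simp) hq₀ hc₀ hle₀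
  have hscale : γ - β - 1 - α - (b + 1) / q = -(a + 1) / p :=
    ENNReal.eq_of_forall_ofReal_rpow_mul_le hA₀ hA hB fun l hl => by
      have := hbound (fun y => testFun (l * y)) (measurable_testFun.comp (measurable_const_mul l))
      rwa [eLpNorm_Hop_comp_mul_left hq₀ _ hl, eLpNorm_wMeasure_comp_mul_left hp₀ _ hl,
        mul_left_comm] at this
  rw [neg_div] at hscale
  exact ⟨by linarith, by linarith, by linarith⟩

theorem stmt_7 (a b p q α β γ : ℝ) (ha : -1 < a) (hb : -1 < b) (hp : 1 ≤ p) (hpq : p ≤ q)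
    (hbdd : ∃ C : ℝ≥0∞, C ≠ ⊤ ∧ ∀ f : ℝ → ℝ, Measurable f →
        eLpNorm (Hop α β γ f) (ENNReal.ofReal q) (wMeasure b)
          ≤ C * eLpNorm f (ENNReal.ofReal p) (wMeasure a)) :
    γ = α + β + 1 + ((b + 1) / q - (a + 1) / p) ∧
      -q * α < b + 1 ∧ b + 1 < q * (γ - α) :=
  stmt_7_general a b p q α β γ hp hpq hbdd
end

section
/- The operator H_{α,β,γ}f(x) = x^α ∫₀^∞ f(y) y^β/(x+y)^γ dy is bounded on L^∞((0,∞)) if and only if α > 0, β > -1 and γ = α + β + 1; moreover, in that case its operator norm equals B(β+1, α). -/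
open MeasureTheory Set ENNReal

/-!
Everything rests on the substitution `y = x u`, which turns `y ^ β / (x + y) ^ γ dy` into
`x ^ (β + 1 - γ) * u ^ β / (1 + u) ^ γ du`. If `γ = α + β + 1` the powers of `x` cancel, so
`H 1 ≡ B(β + 1, α)` and `‖H f‖∞ ≤ B(β + 1, α) ‖f‖∞`: the norm is exactly `B(β + 1, α)`.

Conversely, applying a bounded `H` to the indicator of `(a p, b q)` and looking at some point
`x ∈ (p, q)` bounds `x ^ (α + β + 1 - γ) ∫_a^b u ^ β / (1 + u) ^ γ du` uniformly. Letting `x`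
run over all scales forces `γ = α + β + 1`; then letting `[a, b]` exhaust `(0, ∞)` shows that
`u ^ β / (1 + u) ^ γ` is integrable on `(0, ∞)`, which happens exactly when `β > -1` and `α > 0`.
-/

open Filter

theorem rpow_mem_Icc_of_mem_Icc_one_two {x : ℝ} (hx : x ∈ Icc 1 2) (e : ℝ) :
    x ^ e ∈ Icc (min 1 (2 ^ e)) (max 1 (2 ^ e)) := by
  have hx0 : 0 < x := by linarith [hx.1]
  rcases le_total 0 e with he | he
  · exact ⟨min_le_of_left_le (Real.one_le_rpow hx.1 he),
      le_max_of_le_right (Real.rpow_le_rpow hx0.le hx.2 he)⟩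
  · exact ⟨min_le_of_right_le (Real.rpow_le_rpow_of_nonpos hx0 hx.2 he),
      le_max_of_le_left (Real.rpow_le_one_of_one_le_of_nonpos hx.1 he)⟩

theorem eq_zero_of_forall_rpow_le_s12 {δ B : ℝ} (h : ∀ r : ℝ, 0 < r → r ^ δ ≤ B) : δ = 0 := by
  by_contra hδ
  have hB : (0 : ℝ) < |B| + 1 := by positivity
  have := h _ (Real.rpow_pos_of_pos hB δ⁻¹)
  rw [← Real.rpow_mul hB.le, inv_mul_cancel₀ hδ, Real.rpow_one] at this
  linarith [le_abs_self B]

theorem integrableOn_iff_of_eq_mul {α : Type*} [MeasurableSpace α] {μ : Measure α} {s : Set α}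
    {f g h : α → ℝ} {m M : ℝ} (hs : MeasurableSet s) (hf : AEStronglyMeasurable f (μ.restrict s))
    (hg : AEStronglyMeasurable g (μ.restrict s)) (hm : 0 < m) (hh : ∀ x ∈ s, h x ∈ Icc m M)
    (hgf : ∀ x ∈ s, g x = f x * h x) :
    IntegrableOn f s μ ↔ IntegrableOn g s μ := by
  constructor
  · refine fun hfi => Integrable.mono' (hfi.norm.const_mul M) hg ?_
    filter_upwards [ae_restrict_mem hs] with x hx
    rw [hgf x hx, norm_mul, Real.norm_of_nonneg (hm.le.trans (hh x hx).1), mul_comm]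
    exact mul_le_mul_of_nonneg_right (hh x hx).2 (norm_nonneg _)
  · refine fun hgi => Integrable.mono' (hgi.norm.const_mul m⁻¹) hf ?_
    filter_upwards [ae_restrict_mem hs] with x hx
    have hhx : 0 < h x := hm.trans_le (hh x hx).1
    rw [hgf x hx, norm_mul, Real.norm_of_nonneg hhx.le, inv_mul_eq_div, le_div_iff₀ hm]
    exact mul_le_mul_of_nonneg_left (hh x hx).1 (norm_nonneg _)

theorem integrableOn_Ioi_of_forall_intervalIntegral_le {f : ℝ → ℝ} {K : ℝ}
    (hf : ContinuousOn f (Ioi 0)) (hf0 : ∀ x ∈ Ioi (0 : ℝ), 0 ≤ f x)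
    (hK : ∀ a b : ℝ, 0 < a → a ≤ b → ∫ x in a..b, f x ≤ K) :
    IntegrableOn f (Ioi 0) := by
  have hcover : AECover (volume.restrict (Ioi (0 : ℝ))) atTop
      fun n : ℕ => Ioc (1 / ((n : ℝ) + 1)) (n + 1) :=
    (aecover_Ioi_of_Ioi tendsto_one_div_add_atTop_nhds_zero_nat).inter
      (aecover_Iic (tendsto_natCast_atTop_atTop.atTop_add (tendsto_const_nhds (x := 1))))
  have ha0 (n : ℕ) : 0 < 1 / ((n : ℝ) + 1) := by positivity
  have hab (n : ℕ) : 1 / ((n : ℝ) + 1) ≤ n + 1 := by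
    have h1 : (1 : ℝ) ≤ n + 1 := le_add_of_nonneg_left n.cast_nonneg
    exact (div_le_one_of_le₀ h1 (by positivity)).trans h1
  have hsub (n : ℕ) : Ioc (1 / ((n : ℝ) + 1)) (n + 1) ⊆ Ioi 0 := fun x hx => (ha0 n).trans hx.1
  refine hcover.integrable_of_integral_norm_bounded K (fun n => ?_)
    (Eventually.of_forall fun n => ?_)
  · exact ((hf.mono ((Icc_subset_Ioi_iff (hab n)).mpr (ha0 n))).integrableOn_Icc.mono_set
      Ioc_subset_Icc_self).restrict
  · rw [Measure.restrict_restrict measurableSet_Ioc, inter_eq_left.mpr (hsub n),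
      setIntegral_congr_fun measurableSet_Ioc fun x hx => Real.norm_of_nonneg (hf0 x (hsub n hx)),
      ← intervalIntegral.integral_of_le (hab n)]
    exact hK _ _ (ha0 n) (hab n)

theorem ae_norm_le_toReal_of_eLpNorm_top_le {α : Type*} [MeasurableSpace α] {μ : Measure α}
    {f : α → ℝ} {C : ℝ≥0∞} (hC : C ≠ ⊤) (h : eLpNorm f ⊤ μ ≤ C) :
    ∀ᵐ x ∂μ, ‖f x‖ ≤ C.toReal := by
  rw [eLpNorm_exponent_top] at h
  filter_upwards [enorm_ae_le_eLpNormEssSup f μ] with x hx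
  rw [← toReal_enorm]
  exact ENNReal.toReal_mono hC (hx.trans h)

section Kernel

variable {β γ : ℝ}

theorem continuousOn_rpow_div_add_rpow {x : ℝ} (hx : 0 ≤ x) :
    ContinuousOn (fun y : ℝ => y ^ β / (x + y) ^ γ) (Ioi 0) := by
  intro y (hy : 0 < y)
  have hxy : 0 < x + y := by linarith
  exact ((Real.continuousAt_rpow_const _ _ (Or.inl hy.ne')).div
    ((continuousAt_const.add continuousAt_id).rpow_const (Or.inl hxy.ne'))
    (Real.rpow_pos_of_pos hxy γ).ne').continuousWithinAt

theorem rpow_div_add_rpow_mul_eq {x u : ℝ} (hx : 0 < x) (hu : 0 ≤ u) :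
    (x * u) ^ β / (x + x * u) ^ γ = x ^ (β - γ) * (u ^ β / (1 + u) ^ γ) := by
  rw [show x + x * u = x * (1 + u) by ring, Real.mul_rpow hx.le hu,
    Real.mul_rpow hx.le (by linarith), Real.rpow_sub hx]
  field_simp

theorem integrableOn_Ioi_rpow_div_one_add_rpow_iff :
    IntegrableOn (fun u : ℝ => u ^ β / (1 + u) ^ γ) (Ioi 0) ↔ -1 < β ∧ β + 1 < γ := by
  have hm : 0 < min 1 ((2 : ℝ) ^ γ) := lt_min one_pos (by positivity)
  have hk : AEStronglyMeasurable (fun u : ℝ => u ^ β / (1 + u) ^ γ) :=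
    (by fun_prop : Measurable fun u : ℝ => u ^ β / (1 + u) ^ γ).aestronglyMeasurable
  have hnear : IntegrableOn (fun u : ℝ => u ^ β / (1 + u) ^ γ) (Ioc 0 1) ↔ -1 < β := by
    rw [integrableOn_iff_of_eq_mul (g := fun u => u ^ β) (h := fun u => (1 + u) ^ γ)
      measurableSet_Ioc hk.restrict (by fun_prop) hm, integrableOn_Ioc_iff_integrableOn_Ioo,
      intervalIntegral.integrableOn_Ioo_rpow_iff one_pos]
    · exact fun u hu => rpow_mem_Icc_of_mem_Icc_one_two ⟨by linarith [hu.1], by linarith [hu.2]⟩ γ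
    · intro u hu
      have : 0 < (1 + u) ^ γ := Real.rpow_pos_of_pos (by linarith [hu.1]) γ
      field_simp
  have hfar : IntegrableOn (fun u : ℝ => u ^ β / (1 + u) ^ γ) (Ioi 1) ↔ β + 1 < γ := by
    rw [integrableOn_iff_of_eq_mul (g := fun u => u ^ (β - γ)) (h := fun u => ((1 + u) / u) ^ γ)
      measurableSet_Ioi hk.restrict (by fun_prop) hm, integrableOn_Ioi_rpow_iff one_pos]
    · constructor <;> intro h <;> linarith
    · intro u (hu : 1 < u)
      refine rpow_mem_Icc_of_mem_Icc_one_two ⟨?_, ?_⟩ γ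
      · rw [le_div_iff₀ (by linarith)]; linarith
      · rw [div_le_iff₀ (by linarith)]; linarith
    · intro u (hu : 1 < u)
      have hu0 : 0 < u := by linarith
      have : 0 < (1 + u) ^ γ := Real.rpow_pos_of_pos (by linarith) γ
      rw [Real.div_rpow (by linarith) hu0.le, Real.rpow_sub hu0]
      field_simp
  rw [← Ioc_union_Ioi_eq_Ioi zero_le_one, integrableOn_union, hnear, hfar]

theorem integrableOn_Ioi_rpow_div_add_rpow {x : ℝ} (hx : 0 < x) (hβ : -1 < β) (hγ : β + 1 < γ) :
    IntegrableOn (fun y : ℝ => y ^ β / (x + y) ^ γ) (Ioi 0) := by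
  have h := IntegrableOn.congr_fun
    ((integrableOn_Ioi_rpow_div_one_add_rpow_iff.mpr ⟨hβ, hγ⟩).const_mul (x ^ (β - γ)))
    (fun u (hu : 0 < u) => (rpow_div_add_rpow_mul_eq hx hu.le).symm) measurableSet_Ioi
  simpa using (integrableOn_Ioi_comp_mul_left_iff (fun y : ℝ => y ^ β / (x + y) ^ γ) 0 hx).mp h

theorem integral_Ioi_rpow_div_add_rpow {x : ℝ} (hx : 0 < x) :
    ∫ y in Ioi 0, y ^ β / (x + y) ^ γ = x ^ (β + 1 - γ) * ∫ u in Ioi 0, u ^ β / (1 + u) ^ γ := by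
  have h := integral_comp_mul_left_Ioi (fun y : ℝ => y ^ β / (x + y) ^ γ) 0 hx
  rw [mul_zero, setIntegral_congr_fun measurableSet_Ioi
    (fun u (hu : 0 < u) => rpow_div_add_rpow_mul_eq hx hu.le), integral_const_mul,
    smul_eq_mul, eq_inv_mul_iff_mul_eq₀ hx.ne'] at h
  rw [← h, ← mul_assoc, show β + 1 - γ = β - γ + 1 by ring, Real.rpow_add_one hx.ne', mul_comm x]

theorem intervalIntegral_rpow_div_add_rpow {x a b : ℝ} (hx : 0 < x) (ha : 0 ≤ a) (hb : 0 ≤ b) :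
    ∫ y in x * a..x * b, y ^ β / (x + y) ^ γ
      = x ^ (β + 1 - γ) * ∫ u in a..b, u ^ β / (1 + u) ^ γ := by
  rw [← intervalIntegral.smul_integral_comp_mul_left, intervalIntegral.integral_congr
    (g := fun u => x ^ (β - γ) * (u ^ β / (1 + u) ^ γ)) fun u hu =>
      rpow_div_add_rpow_mul_eq hx (le_min ha hb |>.trans hu.1),
    intervalIntegral.integral_const_mul, smul_eq_mul, ← mul_assoc,
    show β + 1 - γ = β - γ + 1 by ring, Real.rpow_add_one hx.ne', mul_comm x]

end Kernel

theorem Beta_add_one_eq (α β : ℝ) :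
    Beta (β + 1) α = ∫ u in Ioi 0, u ^ β / (1 + u) ^ (α + β + 1) := by
  rw [Beta, add_sub_cancel_right, add_comm (β + 1) α, ← add_assoc]

theorem Beta_add_one_pos {α β : ℝ} (hα : 0 < α) (hβ : -1 < β) : 0 < Beta (β + 1) α := by
  rw [Beta_add_one_eq, setIntegral_pos_iff_support_of_nonneg_ae
    (ae_restrict_of_forall_mem measurableSet_Ioi fun u (hu : 0 < u) => by positivity)
    (integrableOn_Ioi_rpow_div_one_add_rpow_iff.mpr ⟨hβ, by linarith⟩)]
  refine (show (0 : ℝ≥0∞) < volume (Ioi (0 : ℝ)) by simp).trans_le (measure_mono fun u hu => ?_)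
  have hu : (0 : ℝ) < u := hu
  exact ⟨(by positivity : (0 : ℝ) < u ^ β / (1 + u) ^ (α + β + 1)).ne', hu⟩

theorem Hop_one {α β x : ℝ} (hx : 0 < x) :
    Hop α β (α + β + 1) (fun _ => 1) x = Beta (β + 1) α := by
  simp only [Hop, one_mul]
  rw [integral_Ioi_rpow_div_add_rpow hx, ← Beta_add_one_eq, ← mul_assoc, ← Real.rpow_add hx,
    show α + (β + 1 - (α + β + 1)) = 0 by ring, Real.rpow_zero, one_mul]

theorem norm_Hop_le {α β x N : ℝ} {f : ℝ → ℝ} (hα : 0 < α) (hβ : -1 < β)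
    (hf : ∀ᵐ y ∂volume.restrict (Ioi 0), ‖f y‖ ≤ N) (hx : 0 < x) :
    ‖Hop α β (α + β + 1) f x‖ ≤ N * Beta (β + 1) α := by
  have hk := integrableOn_Ioi_rpow_div_add_rpow hx hβ (show β + 1 < α + β + 1 by linarith)
  have hxα : 0 ≤ x ^ α := Real.rpow_nonneg hx.le α
  calc ‖Hop α β (α + β + 1) f x‖
      = x ^ α * ‖∫ y in Ioi 0, f y * y ^ β / (x + y) ^ (α + β + 1)‖ := by
        rw [Hop, norm_mul, Real.norm_of_nonneg hxα]
    _ ≤ x ^ α * ∫ y in Ioi 0, N * (y ^ β / (x + y) ^ (α + β + 1)) := by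
        refine mul_le_mul_of_nonneg_left (norm_integral_le_of_norm_le (hk.const_mul N) ?_) hxα
        filter_upwards [hf, ae_restrict_mem measurableSet_Ioi] with y hfy (hy : 0 < y)
        have hky : 0 ≤ y ^ β / (x + y) ^ (α + β + 1) := by positivity
        rw [mul_div_assoc, norm_mul, Real.norm_of_nonneg hky]
        exact mul_le_mul_of_nonneg_right hfy hky
    _ = N * Beta (β + 1) α := by
        rw [integral_const_mul, integral_Ioi_rpow_div_add_rpow hx, ← Beta_add_one_eq,
          show β + 1 - (α + β + 1) = -α by ring, Real.rpow_neg hx.le]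
        field_simp

theorem Hop_indicator_Ioo (α β γ : ℝ) {s t : ℝ} (hs : 0 ≤ s) (hst : s ≤ t) (x : ℝ) :
    Hop α β γ ((Ioo s t).indicator 1) x = x ^ α * ∫ y in s..t, y ^ β / (x + y) ^ γ := by
  have hind : (fun y => (Ioo s t).indicator 1 y * y ^ β / (x + y) ^ γ)
      = (Ioo s t).indicator fun y => y ^ β / (x + y) ^ γ := by
    funext y
    by_cases hy : y ∈ Ioo s t <;> simp [hy]
  rw [Hop, hind, setIntegral_indicator measurableSet_Ioo,
    inter_eq_right.mpr (Ioo_subset_Ioi_self.trans (Ioi_subset_Ioi hs)),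
    intervalIntegral.integral_of_le hst, integral_Ioc_eq_integral_Ioo]

def HopBoundedBy (α β γ : ℝ) (C : ℝ≥0∞) : Prop :=
  ∀ f : ℝ → ℝ, Measurable f →
    eLpNorm (Hop α β γ f) ⊤ (volume.restrict (Ioi 0)) ≤ C * eLpNorm f ⊤ (volume.restrict (Ioi 0))

theorem hopBoundedBy_Beta {α β : ℝ} (hα : 0 < α) (hβ : -1 < β) :
    HopBoundedBy α β (α + β + 1) (ENNReal.ofReal (Beta (β + 1) α)) := by
  intro f _
  set N := eLpNorm f ⊤ (volume.restrict (Ioi 0))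
  rcases eq_or_ne N ⊤ with hN | hN
  · rw [hN, mul_top (by simpa using Beta_add_one_pos hα hβ)]
    exact le_top
  calc eLpNorm (Hop α β (α + β + 1) f) ⊤ (volume.restrict (Ioi 0))
      ≤ ENNReal.ofReal (N.toReal * Beta (β + 1) α) := by
        rw [eLpNorm_exponent_top]
        refine eLpNormEssSup_le_of_ae_bound ?_
        filter_upwards [ae_restrict_mem measurableSet_Ioi] with x hx
        exact norm_Hop_le hα hβ (ae_norm_le_toReal_of_eLpNorm_top_le hN le_rfl) hx
    _ = ENNReal.ofReal (Beta (β + 1) α) * N := by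
        rw [mul_comm, ENNReal.ofReal_mul (Beta_add_one_pos hα hβ).le, ENNReal.ofReal_toReal hN]

theorem HopBoundedBy.ofReal_Beta_le {α β : ℝ} {C : ℝ≥0∞} (hC : HopBoundedBy α β (α + β + 1) C) :
    ENNReal.ofReal (Beta (β + 1) α) ≤ C := by
  have hμ : volume.restrict (Ioi (0 : ℝ)) ≠ 0 := by simp [Measure.restrict_eq_zero]
  have hHop : Hop α β (α + β + 1) (fun _ => 1) =ᵐ[volume.restrict (Ioi 0)]
      fun _ => Beta (β + 1) α := by
    filter_upwards [ae_restrict_mem measurableSet_Ioi] with x hx using Hop_one hx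
  have h := hC (fun _ => 1) measurable_const
  rw [eLpNorm_congr_ae hHop, eLpNorm_exponent_top, eLpNorm_exponent_top,
    eLpNormEssSup_const _ hμ, eLpNormEssSup_const _ hμ, enorm_one, mul_one] at h
  calc ENNReal.ofReal (Beta (β + 1) α) ≤ ENNReal.ofReal |Beta (β + 1) α| :=
        ENNReal.ofReal_le_ofReal (le_abs_self _)
    _ = ‖Beta (β + 1) α‖ₑ := (Real.enorm_eq_ofReal_abs _).symm
    _ ≤ C := h

namespace HopBoundedBy

variable {α β γ : ℝ} {C : ℝ≥0∞}

theorem exists_rpow_mul_intervalIntegral_le (hC : HopBoundedBy α β γ C) (hCt : C ≠ ⊤)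
    {a b p q : ℝ} (ha : 0 < a) (hab : a ≤ b) (hp : 0 < p) (hpq : p < q) :
    ∃ x ∈ Ioo p q, x ^ (α + β + 1 - γ) * ∫ u in a..b, u ^ β / (1 + u) ^ γ ≤ C.toReal := by
  have hst : a * p ≤ b * q := mul_le_mul hab hpq.le hp.le (ha.trans_le hab).le
  have hind : eLpNorm ((Ioo (a * p) (b * q)).indicator (1 : ℝ → ℝ)) ⊤ (volume.restrict (Ioi 0))
      ≤ 1 := by
    refine (eLpNorm_indicator_const_le (1 : ℝ) ⊤).trans ?_
    simp
  have hbound := ae_norm_le_toReal_of_eLpNorm_top_le hCt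
    ((hC _ (measurable_one.indicator measurableSet_Ioo)).trans (mul_le_of_le_one_right' hind))
  obtain ⟨x, hx, hxC⟩ := Measure.exists_mem_of_measure_ne_zero_of_ae (s := Ioo p q) (by simp [hpq])
    (ae_restrict_of_ae_restrict_of_subset (fun x hx => hp.trans hx.1) hbound)
  refine ⟨x, hx, ?_⟩
  -- `(x a, x b) ⊆ (a p, b q)`, and on `(x a, x b)` the substitution `y = x u` applies.
  have hx0 : 0 < x := hp.trans hx.1
  have hk0 : 0 ≤ᵐ[volume.restrict (Ioc (a * p) (b * q))] fun y => y ^ β / (x + y) ^ γ := by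
    filter_upwards [ae_restrict_mem measurableSet_Ioc] with y hy
    have : 0 < y := (by positivity : 0 < a * p).trans hy.1
    positivity
  have hki : IntervalIntegrable (fun y => y ^ β / (x + y) ^ γ) volume (a * p) (b * q) := by
    refine ((continuousOn_rpow_div_add_rpow hx0.le).mono fun y hy => ?_).intervalIntegrable
    rw [uIcc_of_le hst] at hy
    exact (by positivity : 0 < a * p).trans_le hy.1
  calc x ^ (α + β + 1 - γ) * ∫ u in a..b, u ^ β / (1 + u) ^ γ
      = x ^ α * ∫ y in x * a..x * b, y ^ β / (x + y) ^ γ := by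
        rw [intervalIntegral_rpow_div_add_rpow hx0 ha.le (ha.le.trans hab), ← mul_assoc,
          ← Real.rpow_add hx0]
        ring_nf
    _ ≤ x ^ α * ∫ y in a * p..b * q, y ^ β / (x + y) ^ γ := by
        refine mul_le_mul_of_nonneg_left
          (intervalIntegral.integral_mono_interval ?_ ?_ ?_ hk0 hki) (Real.rpow_nonneg hx0.le α)
        · rw [mul_comm x]; exact mul_le_mul_of_nonneg_left hx.1.le ha.le
        · exact mul_le_mul_of_nonneg_left hab hx0.le
        · rw [mul_comm x]; exact mul_le_mul_of_nonneg_left hx.2.le (ha.le.trans hab)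
    _ = Hop α β γ ((Ioo (a * p) (b * q)).indicator 1) x :=
        (Hop_indicator_Ioo α β γ (by positivity) hst x).symm
    _ ≤ C.toReal := (le_abs_self _).trans hxC

theorem eq_add_add_one (hC : HopBoundedBy α β γ C) (hCt : C ≠ ⊤) : γ = α + β + 1 := by
  set δ := α + β + 1 - γ
  set I := ∫ u in (1 : ℝ)..2, u ^ β / (1 + u) ^ γ
  have hI : 0 < I := by
    refine intervalIntegral.intervalIntegral_pos_of_pos_on
      ((continuousOn_rpow_div_add_rpow zero_le_one).mono fun u hu => ?_).intervalIntegrable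
      (fun u hu => ?_) one_lt_two
    · rw [uIcc_of_le one_le_two] at hu
      exact one_pos.trans_le hu.1
    · have : (0 : ℝ) < u := one_pos.trans hu.1
      positivity
  have hm : 0 < min 1 ((2 : ℝ) ^ δ) := lt_min one_pos (by positivity)
  suffices δ = 0 by linarith
  refine eq_zero_of_forall_rpow_le_s12 (B := C.toReal / (min 1 (2 ^ δ) * I)) fun r hr => ?_
  obtain ⟨x, hx, hxC⟩ :=
    hC.exists_rpow_mul_intervalIntegral_le hCt one_pos one_le_two hr (by linarith : r < 2 * r)
  have hxr : min 1 (2 ^ δ) ≤ (x / r) ^ δ := (rpow_mem_Icc_of_mem_Icc_one_two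
    ⟨(one_le_div hr).mpr hx.1.le, (div_le_iff₀ hr).mpr (by linarith [hx.2])⟩ δ).1
  rw [le_div_iff₀ (mul_pos hm hI)]
  calc r ^ δ * (min 1 (2 ^ δ) * I) ≤ r ^ δ * (x / r) ^ δ * I := by
        rw [← mul_assoc]; gcongr
    _ = x ^ δ * I := by
        rw [← Real.mul_rpow hr.le (div_pos (hr.trans hx.1) hr).le, mul_div_cancel₀ _ hr.ne']
    _ ≤ C.toReal := hxC

theorem integrableOn_Ioi_rpow_div_one_add_rpow (hC : HopBoundedBy α β γ C) (hCt : C ≠ ⊤)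
    (hγ : γ = α + β + 1) : IntegrableOn (fun u : ℝ => u ^ β / (1 + u) ^ γ) (Ioi 0) := by
  refine integrableOn_Ioi_of_forall_intervalIntegral_le (K := C.toReal)
    (continuousOn_rpow_div_add_rpow zero_le_one) (fun u (hu : 0 < u) => by positivity)
    fun a b ha hab => ?_
  obtain ⟨x, -, hx⟩ := hC.exists_rpow_mul_intervalIntegral_le hCt ha hab one_pos one_lt_two
  rwa [show α + β + 1 - γ = 0 by linarith, Real.rpow_zero, one_mul] at hx

theorem exponent_constraints (hC : HopBoundedBy α β γ C) (hCt : C ≠ ⊤) :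
    0 < α ∧ -1 < β ∧ γ = α + β + 1 := by
  have hγ := hC.eq_add_add_one hCt
  obtain ⟨hβ, hβγ⟩ := integrableOn_Ioi_rpow_div_one_add_rpow_iff.mp
    (hC.integrableOn_Ioi_rpow_div_one_add_rpow hCt hγ)
  exact ⟨by linarith, hβ, hγ⟩

end HopBoundedBy

theorem stmt_12 (α β γ : ℝ) :
    ((∃ C : ℝ≥0∞, C ≠ ⊤ ∧ ∀ f : ℝ → ℝ, Measurable f →
        eLpNorm (Hop α β γ f) ⊤ (volume.restrict (Ioi (0:ℝ)))
          ≤ C * eLpNorm f ⊤ (volume.restrict (Ioi (0:ℝ))))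
      ↔ (0 < α ∧ -1 < β ∧ γ = α + β + 1)) ∧
    ((0 < α ∧ -1 < β ∧ γ = α + β + 1) →
      sInf {C : ℝ≥0∞ | ∀ f : ℝ → ℝ, Measurable f →
          eLpNorm (Hop α β γ f) ⊤ (volume.restrict (Ioi (0:ℝ)))
            ≤ C * eLpNorm f ⊤ (volume.restrict (Ioi (0:ℝ)))}
        = ENNReal.ofReal (Beta (β + 1) α)) := by
  refine ⟨⟨fun ⟨C, hCt, hC⟩ => HopBoundedBy.exponent_constraints hC hCt, ?_⟩, ?_⟩
  · rintro ⟨hα, hβ, rfl⟩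
    exact ⟨_, ofReal_ne_top, hopBoundedBy_Beta hα hβ⟩
  · rintro ⟨hα, hβ, rfl⟩
    exact le_antisymm (sInf_le (hopBoundedBy_Beta hα hβ))
      (le_sInf fun C hC => HopBoundedBy.ofReal_Beta_le hC)
end

section
/- Let a > -1. Assume -α < a+1 < β+1 and γ = α + β + 1. Then the operator norm of H_{α,β,γ} on L¹((0,∞), x^a dx) equals B(β - a, α + a + 1). -/
/-!
For `x, y > 0` the substitution `x = y u` gives
`∫₀^∞ x^(α+a) y^β / (x+y)^(α+β+1) dx = B(β - a, α + a + 1) y^a`,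
so by Tonelli `‖H f‖ ≤ B ‖f‖` in `L¹(x^a dx)`, with equality for every nonnegative `f` for
which `H f` is given by absolutely convergent integrals. The normalised function
`1_(0,1] y^(-a)` is such an `f`, so the bound `B` is attained.
-/

open MeasureTheory Set ENNReal

lemma eLpNorm_one_wMeasure (a : ℝ) (g : ℝ → ℝ) :
    eLpNorm g 1 (wMeasure a) = ∫⁻ x in Ioi 0, ‖g x‖ₑ * ENNReal.ofReal (x ^ a) := by
  rw [eLpNorm_one_eq_lintegral_enorm, wMeasure,
    lintegral_withDensity_eq_lintegral_mul_non_measurable _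
      (measurable_id'.pow_const a).ennreal_ofReal (ae_of_all _ fun _ => ofReal_lt_top)]
  simp only [Pi.mul_apply, mul_comm]

lemma enorm_integral_eq_lintegral_enorm_of_nonneg {X : Type*} [MeasurableSpace X] {μ : Measure X}
    {g : X → ℝ} (hg : Integrable g μ) (hg0 : 0 ≤ᵐ[μ] g) :
    ‖∫ x, g x ∂μ‖ₑ = ∫⁻ x, ‖g x‖ₑ ∂μ := by
  rw [Real.enorm_of_nonneg (integral_nonneg_of_ae hg0), ofReal_integral_eq_lintegral_ofReal hg hg0]
  exact lintegral_congr_ae (hg0.mono fun x hx => (Real.enorm_of_nonneg hx).symm)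

section BetaIntegral

variable {p q : ℝ}

lemma integrableOn_rpow_div_one_add_rpow_s14 (hp : -1 < p) (hq : p + 1 < q) :
    IntegrableOn (fun u : ℝ => u ^ p / (1 + u) ^ q) (Ioi 0) := by
  have hq0 : 0 < q := by linarith
  have hmeas : AEStronglyMeasurable (fun u : ℝ => u ^ p / (1 + u) ^ q) :=
    (by fun_prop : Measurable fun u : ℝ => u ^ p / (1 + u) ^ q).aestronglyMeasurable
  rw [← Ioc_union_Ioi_eq_Ioi zero_le_one]
  refine IntegrableOn.union ?_ ?_
  · refine (intervalIntegral.intervalIntegrable_rpow' hp (a := 0) (b := 1)).1.mono'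
      hmeas.restrict (ae_restrict_of_forall_mem measurableSet_Ioc fun u ⟨hu0, _⟩ => ?_)
    rw [Real.norm_of_nonneg (by positivity)]
    exact div_le_self (by positivity) (Real.one_le_rpow (by linarith) hq0.le)
  · refine (integrableOn_Ioi_rpow_of_lt (by linarith : p - q < -1) one_pos).mono'
      hmeas.restrict (ae_restrict_of_forall_mem measurableSet_Ioi fun u (hu : 1 < u) => ?_)
    have hu0 : 0 < u := one_pos.trans hu
    rw [Real.norm_of_nonneg (by positivity), Real.rpow_sub hu0]
    gcongr
    linarith

lemma lintegral_rpow_div_one_add_rpow (hp : -1 < p) (hq : p + 1 < q) :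
    ∫⁻ u in Ioi 0, ENNReal.ofReal (u ^ p / (1 + u) ^ q)
      = ENNReal.ofReal (Beta (p + 1) (q - p - 1)) := by
  rw [← ofReal_integral_eq_lintegral_ofReal (integrableOn_rpow_div_one_add_rpow_s14 hp hq)
      (ae_restrict_of_forall_mem measurableSet_Ioi fun u (hu : 0 < u) => by positivity),
    Beta, add_sub_cancel_right, show p + 1 + (q - p - 1) = q by ring]

lemma lintegral_rpow_div_add_rpow (p q : ℝ) {y : ℝ} (hy : 0 < y) :
    ∫⁻ x in Ioi 0, ENNReal.ofReal (x ^ p / (x + y) ^ q)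
      = ENNReal.ofReal (y ^ (p + 1 - q)) *
          ∫⁻ u in Ioi 0, ENNReal.ofReal (u ^ p / (1 + u) ^ q) := by
  have himage : (y * ·) '' Ioi 0 = Ioi 0 := by rw [image_mul_left_Ioi hy, mul_zero]
  conv_lhs => rw [← himage]
  rw [lintegral_image_eq_lintegral_abs_deriv_mul measurableSet_Ioi
      (fun u _ => ((hasDerivAt_id' u).const_mul y).hasDerivWithinAt)
      (mul_right_injective₀ hy.ne').injOn,
    ← lintegral_const_mul' _ _ ofReal_ne_top]
  refine setLIntegral_congr_fun measurableSet_Ioi fun u (hu : 0 < u) => ?_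
  rw [← ofReal_mul (by positivity), ← ofReal_mul (by positivity)]
  congr 1
  rw [mul_one, abs_of_pos hy, show y * u + y = y * (1 + u) by ring,
    Real.mul_rpow hy.le hu.le, Real.mul_rpow hy.le (by positivity),
    show p + 1 - q = 1 + p - q by ring, Real.rpow_sub hy, Real.rpow_add hy, Real.rpow_one]
  field_simp

end BetaIntegral

lemma Beta_comm (m n : ℝ) : Beta m n = Beta n m := by
  unfold Beta
  rw [← integral_comp_rpow_Ioi (fun u => u ^ (n - 1) / (1 + u) ^ (n + m)) (p := -1)
    (by norm_num)]
  refine setIntegral_congr_fun measurableSet_Ioi fun x (hx : 0 < x) => ?_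
  have hinv : (1 + x⁻¹) ^ (n + m) = (1 + x) ^ (n + m) / x ^ (n + m) := by
    rw [show 1 + x⁻¹ = (1 + x) / x by field_simp; ring, Real.div_rpow (by positivity) hx.le]
  have hpow : x ^ (-1 - 1 : ℝ) * (x ^ (1 - n) * x ^ (n + m)) = x ^ (m - 1) := by
    rw [← Real.rpow_add hx, ← Real.rpow_add hx]
    ring_nf
  rw [smul_eq_mul, Real.rpow_neg_one, Real.inv_rpow hx.le, ← Real.rpow_neg hx.le, neg_sub, hinv,
    div_div_eq_mul_div, abs_neg, abs_one, one_mul, mul_div_assoc', hpow, add_comm n m]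

lemma lintegral_lintegral_hilbertKernel {a α β : ℝ} (hαa : 0 < α + a + 1) (haβ : a < β)
    {F : ℝ → ℝ≥0∞} (hF : Measurable F) :
    ∫⁻ x in Ioi 0, ∫⁻ y in Ioi 0,
        F y * ENNReal.ofReal (x ^ (α + a) * y ^ β / (x + y) ^ (α + β + 1))
      = ENNReal.ofReal (Beta (β - a) (α + a + 1)) *
          ∫⁻ y in Ioi 0, F y * ENNReal.ofReal (y ^ a) := by
  have hmeas : Measurable (Function.uncurry fun x y : ℝ =>
      F y * ENNReal.ofReal (x ^ (α + a) * y ^ β / (x + y) ^ (α + β + 1))) := by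
    fun_prop
  rw [lintegral_lintegral_swap hmeas.aemeasurable, ← lintegral_const_mul' _ _ ofReal_ne_top]
  refine setLIntegral_congr_fun measurableSet_Ioi fun y (hy : 0 < y) => ?_
  have hsplit : ∀ x ∈ Ioi (0 : ℝ),
      ENNReal.ofReal (x ^ (α + a) * y ^ β / (x + y) ^ (α + β + 1))
        = ENNReal.ofReal (y ^ β) * ENNReal.ofReal (x ^ (α + a) / (x + y) ^ (α + β + 1)) :=
    fun x (hx : 0 < x) => by rw [← ofReal_mul (by positivity), mul_comm (x ^ _), mul_div_assoc]
  have hBeta : Beta (α + a + 1) (α + β + 1 - (α + a) - 1) = Beta (β - a) (α + a + 1) := by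
    rw [Beta_comm]; ring_nf
  have hpow : y ^ β * y ^ (α + a + 1 - (α + β + 1)) = y ^ a := by
    rw [← Real.rpow_add hy]; ring_nf
  rw [lintegral_const_mul _ (by fun_prop), setLIntegral_congr_fun measurableSet_Ioi hsplit,
    lintegral_const_mul' _ _ ofReal_ne_top, lintegral_rpow_div_add_rpow _ _ hy,
    lintegral_rpow_div_one_add_rpow (by linarith) (by linarith), hBeta,
    ← mul_assoc (ENNReal.ofReal _), ← ofReal_mul (by positivity), hpow]
  ring

lemma enorm_Hop {α β γ x : ℝ} (f : ℝ → ℝ) (hx : 0 < x) :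
    ‖Hop α β γ f x‖ₑ
      = ENNReal.ofReal (x ^ α) * ‖∫ y in Ioi 0, f y * y ^ β / (x + y) ^ γ‖ₑ := by
  rw [Hop, enorm_mul, Real.enorm_of_nonneg (by positivity)]

lemma lintegral_enorm_mul_hilbertKernel {a α β γ x : ℝ} (f : ℝ → ℝ) (hx : 0 < x) :
    ∫⁻ y in Ioi 0, ‖f y‖ₑ * ENNReal.ofReal (x ^ (α + a) * y ^ β / (x + y) ^ γ)
      = ENNReal.ofReal (x ^ α) * (∫⁻ y in Ioi 0, ‖f y * y ^ β / (x + y) ^ γ‖ₑ) *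
          ENNReal.ofReal (x ^ a) := by
  rw [← lintegral_const_mul' _ _ ofReal_ne_top, ← lintegral_mul_const' _ _ ofReal_ne_top]
  refine setLIntegral_congr_fun measurableSet_Ioi fun y (hy : 0 < y) => ?_
  rw [Real.enorm_eq_ofReal_abs, Real.enorm_eq_ofReal_abs, ← ofReal_mul (by positivity),
    ← ofReal_mul (by positivity), ← ofReal_mul (by positivity), mul_div_assoc (f y), abs_mul,
    abs_of_nonneg (by positivity : 0 ≤ y ^ β / (x + y) ^ γ), Real.rpow_add hx]
  ring_nf

lemma eLpNorm_Hop_le {a α β : ℝ} (hαa : 0 < α + a + 1) (haβ : a < β) {f : ℝ → ℝ}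
    (hf : Measurable f) :
    eLpNorm (Hop α β (α + β + 1) f) 1 (wMeasure a)
      ≤ ENNReal.ofReal (Beta (β - a) (α + a + 1)) * eLpNorm f 1 (wMeasure a) := by
  rw [eLpNorm_one_wMeasure, eLpNorm_one_wMeasure,
    ← lintegral_lintegral_hilbertKernel hαa haβ hf.enorm]
  refine setLIntegral_mono' measurableSet_Ioi fun x (hx : 0 < x) => ?_
  rw [lintegral_enorm_mul_hilbertKernel f hx, enorm_Hop f hx]
  gcongr
  exact enorm_integral_le_lintegral_enorm _

lemma eLpNorm_Hop_eq_of_nonneg {a α β : ℝ} (hαa : 0 < α + a + 1) (haβ : a < β) {f : ℝ → ℝ}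
    (hf : Measurable f) (hf0 : 0 ≤ f)
    (hint : ∀ x > 0, IntegrableOn (fun y => f y * y ^ β / (x + y) ^ (α + β + 1)) (Ioi 0)) :
    eLpNorm (Hop α β (α + β + 1) f) 1 (wMeasure a)
      = ENNReal.ofReal (Beta (β - a) (α + a + 1)) * eLpNorm f 1 (wMeasure a) := by
  rw [eLpNorm_one_wMeasure, eLpNorm_one_wMeasure,
    ← lintegral_lintegral_hilbertKernel hαa haβ hf.enorm]
  refine setLIntegral_congr_fun measurableSet_Ioi fun x (hx : 0 < x) => ?_
  rw [lintegral_enorm_mul_hilbertKernel f hx, enorm_Hop f hx,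
    enorm_integral_eq_lintegral_enorm_of_nonneg (hint x hx)
      (ae_restrict_of_forall_mem measurableSet_Ioi fun y (hy : 0 < y) =>
        div_nonneg (mul_nonneg (hf0 y) (by positivity)) (by positivity))]

noncomputable def indicatorRpowNeg (a : ℝ) : ℝ → ℝ := (Ioc 0 1).indicator (· ^ (-a))

lemma measurable_indicatorRpowNeg (a : ℝ) : Measurable (indicatorRpowNeg a) :=
  (measurable_id'.pow_const _).indicator measurableSet_Ioc

lemma indicatorRpowNeg_nonneg (a : ℝ) : 0 ≤ indicatorRpowNeg a :=
  indicator_nonneg fun _ (hy : _ ∈ Ioc 0 1) => by have := hy.1; positivity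

lemma eLpNorm_indicatorRpowNeg (a : ℝ) : eLpNorm (indicatorRpowNeg a) 1 (wMeasure a) = 1 := by
  have hpt : ∀ y ∈ Ioi (0 : ℝ), ‖indicatorRpowNeg a y‖ₑ * ENNReal.ofReal (y ^ a)
      = (Ioc 0 1).indicator 1 y := fun y (hy : 0 < y) => by
    by_cases h : y ∈ Ioc 0 1
    · rw [indicatorRpowNeg, indicator_of_mem h, indicator_of_mem h,
        Real.enorm_of_nonneg (by positivity), ← ofReal_mul (by positivity), ← Real.rpow_add hy,
        neg_add_cancel, Real.rpow_zero, ofReal_one, Pi.one_apply]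
    · simp [indicatorRpowNeg, h]
  rw [eLpNorm_one_wMeasure, setLIntegral_congr_fun measurableSet_Ioi hpt,
    lintegral_indicator_one measurableSet_Ioc, Measure.restrict_apply measurableSet_Ioc,
    inter_eq_left.mpr Ioc_subset_Ioi_self, Real.volume_Ioc, sub_zero, ofReal_one]

lemma integrableOn_indicatorRpowNeg_mul {a β γ x : ℝ} (haβ : a < β) (hx : 0 < x) :
    IntegrableOn (fun y => indicatorRpowNeg a y * y ^ β / (x + y) ^ γ) (Ioi 0) := by
  have hcont : ContinuousOn (fun y : ℝ => y ^ (β - a) / (x + y) ^ γ) (Icc 0 1) :=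
    (continuousOn_id.rpow_const fun _ _ => Or.inr (by linarith)).div
      ((continuousOn_const.add continuousOn_id).rpow_const fun y hy => Or.inl
        (by linarith [hy.1] : 0 < x + y).ne')
      fun y hy => (Real.rpow_pos_of_pos (by linarith [hy.1]) _).ne'
  refine IntegrableOn.of_forall_sdiff_eq_zero (s := Ioc 0 1) ?_ measurableSet_Ioi
    fun y hy => ?_
  · exact ((hcont.integrableOn_Icc).mono_set Ioc_subset_Icc_self).congr_fun
      (fun y (hy : y ∈ Ioc 0 1) => by
        rw [indicatorRpowNeg, indicator_of_mem hy, ← Real.rpow_add hy.1, neg_add_eq_sub])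
      measurableSet_Ioc
  · simp [indicatorRpowNeg, hy.2]

theorem stmt_14_general (a α β γ : ℝ)
    (h1 : -α < a + 1) (h2 : a + 1 < β + 1) (hγ : γ = α + β + 1) :
    sInf {C : ℝ≥0∞ | ∀ f : ℝ → ℝ, Measurable f →
        eLpNorm (Hop α β γ f) 1 (wMeasure a) ≤ C * eLpNorm f 1 (wMeasure a)}
      = ENNReal.ofReal (Beta (β - a) (α + a + 1)) := by
  subst hγ
  have hαa : 0 < α + a + 1 := by linarith
  have haβ : a < β := by linarith
  refine le_antisymm (sInf_le fun f hf => eLpNorm_Hop_le hαa haβ hf) (le_sInf fun C hC => ?_)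
  have hext := hC (indicatorRpowNeg a) (measurable_indicatorRpowNeg a)
  rwa [eLpNorm_Hop_eq_of_nonneg hαa haβ (measurable_indicatorRpowNeg a)
      (indicatorRpowNeg_nonneg a) fun x hx => integrableOn_indicatorRpowNeg_mul haβ hx,
    eLpNorm_indicatorRpowNeg, mul_one, mul_one] at hext

theorem stmt_14 (a α β γ : ℝ) (ha : -1 < a)
    (h1 : -α < a + 1) (h2 : a + 1 < β + 1) (hγ : γ = α + β + 1) :
    sInf {C : ℝ≥0∞ | ∀ f : ℝ → ℝ, Measurable f →
        eLpNorm (Hop α β γ f) 1 (wMeasure a) ≤ C * eLpNorm f 1 (wMeasure a)}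
      = ENNReal.ofReal (Beta (β - a) (α + a + 1)) :=
  stmt_14_general a α β γ h1 h2 hγ
end
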